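/- Let e be idempotent modulo m, a, b ∈ R_m^e with a ≡ b^i (mod m) for some i ≥ 1, let ind denote the least such i, and k ≥ 1. Then gcd(k, |b|_m) divides ind if and only if a^(|b|_m / gcd(k, |b|_m)) is idempotent modulo m. -/

import Mathlib

/-- `e` is an idempotent residue modulo `m`: `e^2 ≡ e (mod m)`. -/
def Idem (m : ℕ) (e : ZMod m) : Prop := e ^ 2 = e

/-- The order `|a|_m`: the least `n ≥ 1` such that `a^n` is idempotent mod `m`. -/
noncomputable def ord (m : ℕ) (a : ZMod m) : ℕ := sInf {n | 1 ≤ n ∧ Idem m (a ^ n)}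

/-- `a` is regular modulo `m`: `a^(|a|_m + 1) ≡ a (mod m)`. -/
noncomputable def Reg (m : ℕ) (a : ZMod m) : Prop := a ^ (ord m a + 1) = a

/-- `R_m^e`: the regular residues mod `m` whose idempotent power is `e`. -/
noncomputable def Rme (m : ℕ) (e : ZMod m) : Set (ZMod m) :=
  {a | Reg m a ∧ a ^ (ord m a) = e}

/-- The orbit of `a` modulo `m`: `{a^j mod m : 1 ≤ j ≤ |a|_m}`. -/
noncomputable def orb (m : ℕ) (a : ZMod m) : Finset (ZMod m) :=
  (Finset.Icc 1 (ord m a)).image (a ^ ·)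

/-!
As `ZMod m` is finite, some positive power of `b` is idempotent, so `t = |b|_m ≥ 1`. Since `b` is
regular, `b^(n + t) = b^n` for `n ≥ 1`, so the positive powers of `b` only depend on the exponent
modulo `t`; by minimality of `t` this gives `b^n` idempotent iff `t ∣ n`. With `g = gcd(k, t)`
and `a = b^ind`, the power `a^(t/g) = b^(ind·t/g)` is therefore idempotent iff
`g·(t/g) ∣ ind·(t/g)`, i.e. iff `g ∣ ind`.
-/

section Monoid

variable {M : Type*} [Monoid M]

theorem pow_add_mul_eq_of_pow_add_eq {x : M} {s d : ℕ} (h : x ^ (s + d) = x ^ s) {n : ℕ}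
    (hn : s ≤ n) (q : ℕ) : x ^ (n + q * d) = x ^ n := by
  obtain ⟨c, rfl⟩ := Nat.exists_eq_add_of_le hn
  induction q with
  | zero => simp
  | succ q ih =>
    calc x ^ (s + c + (q + 1) * d) = x ^ (s + d) * x ^ (c + q * d) := by rw [← pow_add]; ring_nf
      _ = x ^ (s + c + q * d) := by rw [h, ← pow_add]; ring_nf
      _ = x ^ (s + c) := ih

theorem exists_isIdempotentElem_pow [Finite M] (x : M) : ∃ n ≠ 0, IsIdempotentElem (x ^ n) := by
  obtain ⟨i, j, hij, hx⟩ := Finite.exists_ne_map_eq_of_infinite fun i : ℕ ↦ x ^ (i + 1)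
  wlog hlt : i < j generalizing i j
  · exact this j i hij.symm hx.symm (by omega)
  have hper : x ^ ((i + 1) + (j - i)) = x ^ (i + 1) := by
    rw [show i + 1 + (j - i) = j + 1 by omega]; exact hx.symm
  -- `(i + 1) * (j - i)` is past the preperiod `i + 1` and a multiple of the period `j - i`.
  refine ⟨(i + 1) * (j - i), Nat.mul_ne_zero (by omega) (by omega), ?_⟩
  rw [IsIdempotentElem, ← pow_add]
  exact pow_add_mul_eq_of_pow_add_eq hper (Nat.le_mul_of_pos_right _ (by omega)) (i + 1)

end Monoid

theorem idem_iff_isIdempotentElem {m : ℕ} {x : ZMod m} : Idem m x ↔ IsIdempotentElem x := by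
  rw [Idem, sq, IsIdempotentElem]

theorem one_le_ord_and_idem_pow_ord {m : ℕ} (hm : 1 ≤ m) (b : ZMod m) :
    1 ≤ ord m b ∧ Idem m (b ^ ord m b) := by
  have : NeZero m := ⟨by omega⟩
  obtain ⟨n, hn, hidem⟩ := exists_isIdempotentElem_pow b
  exact Nat.sInf_mem (s := {n | 1 ≤ n ∧ Idem m (b ^ n)})
    ⟨n, Nat.one_le_iff_ne_zero.mpr hn, idem_iff_isIdempotentElem.mpr hidem⟩

theorem Reg.pow_eq_pow_mod {m : ℕ} {b : ZMod m} (hb : Reg m b) {n : ℕ}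
    (hn : n % ord m b ≠ 0) :
    b ^ n = b ^ (n % ord m b) := by
  have hper : b ^ (1 + ord m b) = b ^ 1 := by rw [add_comm, pow_one]; exact hb
  rw [← pow_add_mul_eq_of_pow_add_eq hper (Nat.one_le_iff_ne_zero.mpr hn) (n / ord m b),
    Nat.mod_add_div']

theorem Reg.idem_pow_iff_ord_dvd {m : ℕ} (hm : 1 ≤ m) {b : ZMod m} (hb : Reg m b) {n : ℕ}
    (hn : n ≠ 0) : Idem m (b ^ n) ↔ ord m b ∣ n := by
  obtain ⟨hord, hidem⟩ := one_le_ord_and_idem_pow_ord hm b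
  constructor
  · intro hbn
    by_contra hndvd
    have hr : n % ord m b ≠ 0 := fun h ↦ hndvd (Nat.dvd_of_mod_eq_zero h)
    have hbr : Idem m (b ^ (n % ord m b)) := hb.pow_eq_pow_mod hr ▸ hbn
    exact Nat.notMem_of_lt_sInf (s := {n | 1 ≤ n ∧ Idem m (b ^ n)}) (Nat.mod_lt n hord)
      ⟨Nat.one_le_iff_ne_zero.mpr hr, hbr⟩
  · rintro ⟨q, rfl⟩
    rw [idem_iff_isIdempotentElem] at hidem ⊢
    rw [pow_mul]
    exact hidem.pow q

theorem Nat.dvd_mul_div_iff {g t i : ℕ} (hgt : g ∣ t) (ht : t ≠ 0) :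
    t ∣ i * (t / g) ↔ g ∣ i := by
  have hq : t / g ≠ 0 :=
    (Nat.div_ne_zero_iff_of_dvd hgt).mpr ⟨ht, ne_zero_of_dvd_ne_zero ht hgt⟩
  calc t ∣ i * (t / g) ↔ g * (t / g) ∣ i * (t / g) := by rw [Nat.mul_div_cancel' hgt]
    _ ↔ g ∣ i := Nat.mul_dvd_mul_iff_right (Nat.pos_of_ne_zero hq)

theorem gcd_dvd_ind_iff_general (m : ℕ) (hm : 1 ≤ m) (e : ZMod m)
    (a b : ZMod m) (hb : b ∈ Rme m e)
    (hex : ∃ i, 1 ≤ i ∧ b ^ i = a)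
    (ind : ℕ) (hind : ind = sInf {i | 1 ≤ i ∧ b ^ i = a})
    (k : ℕ) :
    Nat.gcd k (ord m b) ∣ ind ↔
      Idem m (a ^ (ord m b / Nat.gcd k (ord m b))) := by
  have hord : ord m b ≠ 0 := Nat.one_le_iff_ne_zero.mp (one_le_ord_and_idem_pow_ord hm b).1
  obtain ⟨hind1, rfl⟩ : 1 ≤ ind ∧ b ^ ind = a := hind ▸ Nat.sInf_mem hex
  have hg : Nat.gcd k (ord m b) ∣ ord m b := Nat.gcd_dvd_right k (ord m b)
  have hexp : ind * (ord m b / Nat.gcd k (ord m b)) ≠ 0 := Nat.mul_ne_zero (by omega)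
    ((Nat.div_ne_zero_iff_of_dvd hg).mpr ⟨hord, Nat.gcd_ne_zero_right hord⟩)
  rw [← pow_mul, hb.1.idem_pow_iff_ord_dvd hm hexp, Nat.dvd_mul_div_iff hg hord]

/-- For `a, b ∈ R_m^e` with `a` in the orbit of `b`, `ind` the least `i ≥ 1` with
`b^i ≡ a`, and `k ≥ 1`: `gcd(k,|b|_m) ∣ ind` iff `a^(|b|_m/gcd(k,|b|_m))` is
idempotent mod `m`. -/
theorem gcd_dvd_ind_iff (m : ℕ) (hm : 1 ≤ m) (e : ZMod m) (he : Idem m e)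
    (a b : ZMod m) (ha : a ∈ Rme m e) (hb : b ∈ Rme m e)
    (hex : ∃ i, 1 ≤ i ∧ b ^ i = a)
    (ind : ℕ) (hind : ind = sInf {i | 1 ≤ i ∧ b ^ i = a})
    (k : ℕ) (hk : 1 ≤ k) :
    Nat.gcd k (ord m b) ∣ ind ↔
      Idem m (a ^ (ord m b / Nat.gcd k (ord m b))) :=
  gcd_dvd_ind_iff_general m hm e a b hb hex ind hind k
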